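/- arXiv:1411.7493 — 4 statements merged into one kernel-verified Lean document; each statement's English description precedes it below -/
import Mathlib

section
/- Let w be a coset leader of a linear code C ⊆ F_q^n and let y be obtained from w by subtracting one nonzero 'unit' of its generalized support (i.e., w = y + β^{j-1}e_i where the (i,j) entry of the p-adic expansion of w is nonzero and the representation y is in standard form). Then w_H(y) ≤ w_H(y + C) + 1, where w_H(y + C) denotes the minimum Hamming weight in the coset y + C. -/
open Finset Set

variable {p m n : ℕ} [Fact p.Prime] {K : Type} [Field K] [Fintype K] [DecidableEq K]
  [Algebra (ZMod p) K]

/-- Hamming weight -/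
def hw (v : Fin n → K) : ℕ := (Finset.univ.filter fun i => v i ≠ 0).card

/-- Hamming distance -/
def dH (x y : Fin n → K) : ℕ := hw (x - y)

/-- Hamming distance from a word to a set of words -/
noncomputable def dHSet (A : Set (Fin n → K)) (y : Fin n → K) : ℕ := sInf ((dH y) '' A)

/-- y is a coset leader: minimal Hamming weight in its coset -/
def isCosetLeader (C : Submodule K (Fin n → K)) (y : Fin n → K) : Prop :=
  ∀ c ∈ C, hw y ≤ hw (y + c)

/-- the set of coset leaders -/
def CL (C : Submodule K (Fin n → K)) : Set (Fin n → K) := {y | isCosetLeader C y}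

/-- weight of the coset of y -/
noncomputable def cosetWt (C : Submodule K (Fin n → K)) (y : Fin n → K) : ℕ :=
  sInf (hw '' {z | z - y ∈ C})

/-- minimum distance of the code -/
noncomputable def dmin (C : Submodule K (Fin n → K)) : ℕ :=
  sInf (hw '' {c | c ∈ C ∧ c ≠ 0})

/-- covering radius -/
noncomputable def covRad (C : Submodule K (Fin n → K)) : ℕ :=
  sSup (Set.range fun y => dHSet (C : Set (Fin n → K)) y)

/-- Voronoi region of a codeword -/
def VorD (C : Submodule K (Fin n → K)) (c : Fin n → K) : Set (Fin n → K) :=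
  {y | ∀ c' ∈ C, dH y c ≤ dH y c'}

/-- words at Hamming distance exactly one from A -/
def XB (A : Set (Fin n → K)) : Set (Fin n → K) := {y | dHSet A y = 1}

/-- boundary of a set of words -/
def bdry (A : Set (Fin n → K)) : Set (Fin n → K) := XB A ∪ XB Aᶜ

/-- canonical generator e_{ij} = β^{j-1} e_i -/
def eGen (β : K) (i : Fin n) (j : Fin m) : Fin n → K := Pi.single i (β ^ (j : ℕ))

/-- leader codeword -/
def isLeaderCodeword (C : Submodule K (Fin n → K)) (b : Module.Basis (Fin m) (ZMod p) K)
    (β : K) (w : Fin n → K) : Prop :=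
  w ≠ 0 ∧ w ∈ C ∧ ∃ (n₁ n₂ : Fin n → K) (i : Fin n) (j : Fin m),
    w = n₁ + eGen β i j - n₂ ∧
    (b.repr ((n₁ + eGen β i j) i) j).val = (b.repr (n₁ i) j).val + 1 ∧
    isCosetLeader C n₂ ∧ dHSet (CL C) n₁ ≤ 1 ∧ dHSet (CL C) (n₁ + eGen β i j) ≤ 1

/-- correctable errors: minimal element of each coset w.r.t. the order r -/
def E0 (C : Submodule K (Fin n → K)) (r : (Fin n → K) → (Fin n → K) → Prop) :
    Set (Fin n → K) := {y | ∀ z, z - y ∈ C → z ≠ y → r y z}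

/-- uncorrectable errors -/
def E1 (C : Submodule K (Fin n → K)) (r : (Fin n → K) → (Fin n → K) → Prop) :
    Set (Fin n → K) := (E0 C r)ᶜ

/-- H(y) = { c ∈ C : y - c ≺ y } -/
def Hset (C : Submodule K (Fin n → K)) (r : (Fin n → K) → (Fin n → K) → Prop)
    (y : Fin n → K) : Set (Fin n → K) := {c | c ∈ C ∧ r (y - c) y}

/-- u is a larger half of c -/
def isLargerHalf (r : (Fin n → K) → (Fin n → K) → Prop) (c u : Fin n → K) : Prop :=
  r (u - c) u ∧ ∀ u', r (u' - c) u' → ¬ r u' u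

/-- larger halves of elements of T -/
def LH (r : (Fin n → K) → (Fin n → K) → Prop) (T : Set (Fin n → K)) :
    Set (Fin n → K) := {u | ∃ c ∈ T, isLargerHalf r c u}

/-- x ⊂₁ y : componentwise F_p-coefficient containment with disjoint generalized
supports of x and y - x -/
def subset1 (b : Module.Basis (Fin m) (ZMod p) K) (x y : Fin n → K) : Prop :=
  (∀ (i : Fin n) (j : Fin m), (b.repr (x i) j).val ≤ (b.repr (y i) j).val) ∧
  ∀ (i : Fin n) (j : Fin m), b.repr (x i) j ≠ 0 → b.repr ((y - x) i) j = 0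

/-- minimal uncorrectable errors w.r.t. ⊂₁ -/
def M1 (C : Submodule K (Fin n → K)) (r : (Fin n → K) → (Fin n → K) → Prop)
    (b : Module.Basis (Fin m) (ZMod p) K) : Set (Fin n → K) :=
  {y | y ∈ E1 C r ∧ ∀ x, subset1 b x y → x ∈ E1 C r → x = y}

/-- trial set -/
def isTrialSet (C : Submodule K (Fin n → K)) (r : (Fin n → K) → (Fin n → K) → Prop)
    (T : Set (Fin n → K)) : Prop :=
  T ⊆ (C : Set (Fin n → K)) ∧ (0 : Fin n → K) ∉ T ∧
    ∀ y, y ∈ E0 C r ↔ ∀ c ∈ T, (y = y + c ∨ r y (y + c))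

theorem hw_add_single_le {K : Type} [Field K] [DecidableEq K] (v : Fin n → K) (i : Fin n)
    (a : K) : hw (v + Pi.single i a) ≤ hw v + 1 := by
  have hsupp : (Finset.univ.filter fun k => (v + Pi.single i a : Fin n → K) k ≠ 0) ⊆
      insert i (Finset.univ.filter fun k => v k ≠ 0) := by
    intro k hk
    rcases eq_or_ne k i with rfl | hki
    · exact Finset.mem_insert_self k _
    · exact Finset.mem_insert_of_mem (by simpa [Pi.single_eq_of_ne hki] using hk)
  exact (Finset.card_le_card hsupp).trans (card_insert_le _ _)

theorem hw_le_hw_add_single {K : Type} [Field K] [DecidableEq K] {v : Fin n → K} {i : Fin n}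
    {a : K} (hi : v i + a ≠ 0) : hw v ≤ hw (v + Pi.single i a) := by
  refine Finset.card_le_card fun k hk => ?_
  rcases eq_or_ne k i with rfl | hki
  · simpa using hi
  · simpa [Pi.single_eq_of_ne hki] using hk

theorem isCosetLeader.hw_le_of_sub_mem {K : Type} [Field K] [DecidableEq K]
    {C : Submodule K (Fin n → K)} {w z : Fin n → K} (hlead : isCosetLeader C w)
    (hz : z - w ∈ C) : hw w ≤ hw z := by
  simpa using hlead (z - w) hz

theorem stmt3_general (C : Submodule K (Fin n → K)) (b : Module.Basis (Fin m) (ZMod p) K) (β : K)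
    (w y : Fin n → K) (i : Fin n) (j : Fin m)
    (hleader : isCosetLeader C w)
    (hsum : w = y + eGen β i j)
    (hsf : (b.repr (w i) j).val = (b.repr (y i) j).val + 1) :
    hw y ≤ cosetWt C y + 1 := by
  have hwi : w i ≠ 0 := by
    rintro h
    simp [h] at hsf
  obtain ⟨z, hz, hz_wt⟩ : ∃ z, z - y ∈ C ∧ hw z = cosetWt C y :=
    Nat.sInf_mem (⟨hw y, y, by simp, rfl⟩ : (hw '' {z | z - y ∈ C}).Nonempty)
  subst hsum
  calc hw y ≤ hw (y + eGen β i j) := hw_le_hw_add_single (by simpa [eGen] using hwi)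
    _ ≤ hw (z + eGen β i j) :=
      hleader.hw_le_of_sub_mem (by rwa [add_sub_add_right_eq_sub])
    _ ≤ hw z + 1 := hw_add_single_le z i _
    _ = cosetWt C y + 1 := by rw [hz_wt]

theorem stmt3 (C : Submodule K (Fin n → K)) (b : Module.Basis (Fin m) (ZMod p) K) (β : K)
    (hβ : ∀ j : Fin m, b j = β ^ (j : ℕ))
    (w y : Fin n → K) (i : Fin n) (j : Fin m)
    (hleader : isCosetLeader C w)
    (hsum : w = y + eGen β i j)
    (hsf : (b.repr (w i) j).val = (b.repr (y i) j).val + 1) :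
    hw y ≤ cosetWt C y + 1 :=
  stmt3_general C b β w y i j hleader hsum hsf
end

section
/- The set of leader codewords L(C) of a linear code C is a test set for C: for every y ∈ F_q^n, either y is a coset leader (y ∈ D(0)), or there exists v ∈ L(C) with w_H(y − v) < w_H(y). -/
open Finset Set

variable {p m n : ℕ} [Fact p.Prime] {K : Type} [Field K] [Fintype K] [DecidableEq K]
  [Algebra (ZMod p) K]

/-!
If `y` is not a coset leader, restrict it to a set of coordinates of minimal size on which it is
still not a coset leader; call the restriction `w`. Zeroing one more coordinate `i` of `w` gives a
coset leader. Choose `j` with a nonzero `j`-th coefficient of `w i`, put `n₁ = w - e_{ij}` (so that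
`n₁ + e_{ij} = w` is in standard form) and let `n₂` be a coset leader of `w + C`; then `w - n₂` is a
leader codeword. Since `w` and `y - w` have disjoint supports,
`w_H(y - (w - n₂)) ≤ w_H(y - w) + w_H(n₂) < w_H(y - w) + w_H(w) = w_H(y)`.
-/

lemma Finset.piecewise_erase_eq_update {ι : Type*} [DecidableEq ι] {π : ι → Sort*}
    (s : Finset ι) (f g : ∀ i, π i) (i : ι) :
    (s.erase i).piecewise f g = Function.update (s.piecewise f g) i (g i) := by
  ext k
  by_cases hk : k = i
  · subst hk; simp
  · simp [Finset.piecewise, hk]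

lemma ZMod.val_sub_one_add_one {p : ℕ} [Fact (1 < p)] {a : ZMod p} (ha : a ≠ 0) :
    (a - 1).val + 1 = a.val := by
  have hpos : 0 < a.val := ZMod.val_pos.2 ha
  rw [ZMod.val_sub (by rwa [ZMod.val_one]), ZMod.val_one]
  omega

section CosetLeader

variable {F : Type} [Field F] [DecidableEq F]

lemma hw_add_le (a c : Fin n → F) : hw (a + c) ≤ hw a + hw c := by
  refine (Finset.card_le_card fun k hk => ?_).trans (Finset.card_union_le _ _)
  simp only [Finset.mem_filter, Finset.mem_univ, true_and, Finset.mem_union] at hk ⊢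
  by_contra! h
  exact hk (by simp [h.1, h.2])

lemma hw_piecewise_add_hw_sub (T : Finset (Fin n)) (y : Fin n → F) :
    hw (T.piecewise y 0) + hw (y - T.piecewise y 0) = hw y := by
  unfold hw
  rw [← Finset.card_filter_add_card_filter_not (s := {k | y k ≠ 0}) (· ∈ T),
    Finset.filter_filter, Finset.filter_filter]
  congr 2 <;> ext k <;> by_cases hk : k ∈ T <;> simp [hk]

lemma dH_le_one_of_eq_of_ne {x z : Fin n → F} (i : Fin n) (h : ∀ k ≠ i, x k = z k) :
    dH x z ≤ 1 := by
  unfold dH hw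
  refine (Finset.card_le_card (t := {i}) fun k hk => ?_).trans (Finset.card_singleton i).le
  simp only [Finset.mem_filter, Finset.mem_univ, true_and, Pi.sub_apply, sub_ne_zero] at hk
  exact Finset.mem_singleton.2 (by_contra fun hki => hk (h k hki))

lemma dHSet_le_dH {A : Set (Fin n → F)} {a : Fin n → F} (ha : a ∈ A) (x : Fin n → F) :
    dHSet A x ≤ dH x a :=
  Nat.sInf_le ⟨a, ha, rfl⟩

lemma isCosetLeader_zero (C : Submodule F (Fin n → F)) : isCosetLeader C 0 := fun _ _ => by
  simp [hw]

lemma exists_cosetLeader_lt {C : Submodule F (Fin n → F)} {w : Fin n → F}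
    (h : ¬ isCosetLeader C w) : ∃ u, isCosetLeader C u ∧ w - u ∈ C ∧ hw u < hw w := by
  obtain ⟨u, hu, hmin⟩ := (measure (hw : (Fin n → F) → ℕ)).wf.has_min {z | w - z ∈ C}
    ⟨w, by simp⟩
  have hmin' : ∀ z, w - z ∈ C → hw u ≤ hw z := fun z hz => not_lt.1 (hmin z hz)
  refine ⟨u, fun c hc => hmin' _ ?_, hu, ?_⟩
  · simpa only [sub_add_eq_sub_sub] using C.sub_mem hu hc
  · obtain ⟨c, hc, hlt⟩ := not_forall₂.1 h
    exact (hmin' (w + c) (by simpa using C.neg_mem hc)).trans_lt (not_le.1 hlt)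

lemma exists_subword_not_isCosetLeader {C : Submodule F (Fin n → F)} {y : Fin n → F}
    (hy : ¬ isCosetLeader C y) :
    ∃ w : Fin n → F, hw w + hw (y - w) = hw y ∧ ¬ isCosetLeader C w ∧
      ∃ i, w i ≠ 0 ∧ isCosetLeader C (Function.update w i 0) := by
  obtain ⟨T, hT, hmin⟩ := (measure Finset.card).wf.has_min
    {T : Finset (Fin n) | ¬ isCosetLeader C (T.piecewise y 0)} ⟨univ, by simpa using hy⟩
  obtain ⟨i, hi⟩ : T.Nonempty := by
    refine Finset.nonempty_iff_ne_empty.2 fun hT0 => hT ?_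
    rw [hT0, Finset.piecewise_empty]
    exact isCosetLeader_zero C
  have herase : isCosetLeader C (Function.update (T.piecewise y 0) i 0) := by
    have h := not_not.1 fun h => hmin (T.erase i) h (Finset.card_erase_lt_of_mem hi)
    rwa [Finset.piecewise_erase_eq_update] at h
  refine ⟨T.piecewise y 0, hw_piecewise_add_hw_sub T y, hT, i, fun hyi => hT ?_, herase⟩
  rwa [Function.update_eq_self_iff.2 hyi.symm] at herase

lemma isLeaderCodeword_sub_cosetLeader [Algebra (ZMod p) F] {C : Submodule F (Fin n → F)}
    {b : Module.Basis (Fin m) (ZMod p) F} {β : F} (hβ : ∀ j : Fin m, b j = β ^ (j : ℕ))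
    {w u n₂ : Fin n → F} {i : Fin n} {j : Fin m} (hj : b.repr (w i) j ≠ 0)
    (hu : isCosetLeader C u) (hwu : ∀ k ≠ i, w k = u k)
    (hn₂ : isCosetLeader C n₂) (hwn₂ : w - n₂ ∈ C) (hne : w ≠ n₂) :
    isLeaderCodeword C b β (w - n₂) := by
  have hsplit : w - eGen β i j + eGen β i j = w := sub_add_cancel _ _
  have hrepr : b.repr ((w - eGen β i j) i) j = b.repr (w i) j - 1 := by
    simp [eGen, ← hβ]
  refine ⟨sub_ne_zero.2 hne, hwn₂, w - eGen β i j, n₂, i, j, by rw [hsplit], ?_, hn₂, ?_, ?_⟩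
  · rw [hsplit, hrepr, ZMod.val_sub_one_add_one hj]
  · refine (dHSet_le_dH hu _).trans (dH_le_one_of_eq_of_ne i fun k hk => ?_)
    simp [eGen, hk, hwu k hk]
  · rw [hsplit]
    exact (dHSet_le_dH hu _).trans (dH_le_one_of_eq_of_ne i hwu)

end CosetLeader

/-- the leader codewords form a test set. -/
theorem stmt8 (C : Submodule K (Fin n → K)) (b : Module.Basis (Fin m) (ZMod p) K) (β : K)
    (hβ : ∀ j : Fin m, b j = β ^ (j : ℕ)) (y : Fin n → K) :
    isCosetLeader C y ∨ ∃ v : Fin n → K, isLeaderCodeword C b β v ∧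
      hw (y - v) < hw y := by
  refine or_iff_not_imp_left.2 fun hy => ?_
  obtain ⟨w, hsplit, hwC, i, hwi, hu⟩ := exists_subword_not_isCosetLeader hy
  obtain ⟨j, hj⟩ : ∃ j, b.repr (w i) j ≠ 0 := Finsupp.ne_iff.1 (b.repr.map_ne_zero_iff.2 hwi)
  obtain ⟨n₂, hn₂, hwn₂, hlt⟩ := exists_cosetLeader_lt hwC
  refine ⟨w - n₂, isLeaderCodeword_sub_cosetLeader hβ hj hu
    (fun k hk => (Function.update_of_ne hk _ _).symm) hn₂ hwn₂ (ne_of_apply_ne _ hlt.ne'), ?_⟩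
  calc hw (y - (w - n₂)) = hw (y - w + n₂) := by rw [sub_sub_eq_add_sub, add_sub_right_comm]
    _ ≤ hw (y - w) + hw n₂ := hw_add_le _ _
    _ < hw w + hw (y - w) := by omega
    _ = hw y := hsplit
end

section
/- If a nonzero codeword w of a linear code C satisfies X(D(0)) ∩ D(w) ≠ ∅, then w is a leader codeword of C. -/
open Finset Set

variable {p m n : ℕ} [Fact p.Prime] {K : Type} [Field K] [Fintype K] [DecidableEq K]
  [Algebra (ZMod p) K]

/-!
Let `y ∈ X(D(0)) ∩ D(w)`. Since `D(0)` is the set of coset leaders, `y` is one coordinate `i`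
away from a coset leader `v` but is not itself a coset leader, and `y - w` is a coset leader
because `y ∈ D(w)`. If `y i` were zero, `y` would be `v` with one nonzero entry erased, and
erasing entries of a coset leader yields a coset leader. So some `𝔽_p`-digit `j` of `y i` is
nonzero, and `w = n₁ + e_{ij} - (y - w)` with `n₁ = y - e_{ij}`: adding `e_{ij}` to `n₁` raises
that digit by one without a carry, and both `n₁` and `n₁ + e_{ij} = y` agree with `v` off `i`.
-/

section Hamming

variable {ι R : Type*} [Fintype ι] [DecidableEq R]

lemma exists_forall_ne_eq_of_hammingDist_eq_one {x y : ι → R} (h : hammingDist x y = 1) :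
    ∃ i, x i ≠ y i ∧ ∀ j ≠ i, x j = y j := by
  obtain ⟨i, hi⟩ := Finset.card_eq_one.mp h
  refine ⟨i, by simpa using hi.ge (Finset.mem_singleton_self i), fun j hj => ?_⟩
  by_contra hne
  exact hj (Finset.mem_singleton.mp (hi ▸ Finset.mem_filter.mpr ⟨Finset.mem_univ j, hne⟩))

lemma hammingDist_le_one_of_forall_ne_eq {x y : ι → R} {i : ι} (h : ∀ j ≠ i, x j = y j) :
    hammingDist x y ≤ 1 := by
  refine (Finset.card_le_card fun j hj => ?_).trans (Finset.card_singleton i).le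
  by_contra hne
  exact (Finset.mem_filter.mp hj).2 (h j (Finset.notMem_singleton.mp hne))

lemma hammingNorm_lt_of_forall_ne_eq [Zero R] {x y : ι → R} {i : ι} (h : ∀ j ≠ i, x j = y j)
    (hx : x i = 0) (hy : y i ≠ 0) : hammingNorm x < hammingNorm y := by
  refine Finset.card_lt_card (Finset.ssubset_iff_of_subset (fun j hj => ?_) |>.mpr
    ⟨i, by simpa using hy, by simpa using hx⟩)
  have hj : x j ≠ 0 := (Finset.mem_filter.mp hj).2
  have hji : j ≠ i := by rintro rfl; exact hj hx
  simpa [← h j hji] using hj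

end Hamming

lemma ZMod.val_eq_val_sub_one_add_one {N : ℕ} [Fact (1 < N)] {a : ZMod N} (ha : a ≠ 0) :
    a.val = (a - 1).val + 1 := by
  have h1 : 1 ≤ a.val := Nat.one_le_iff_ne_zero.mpr ((ZMod.val_ne_zero a).mpr ha)
  rw [ZMod.val_sub (ZMod.val_one N ▸ h1), ZMod.val_one]
  omega

section CosetLeader

variable {F : Type} [Field F] [DecidableEq F]

lemma hw_eq_hammingNorm (x : Fin n → F) : hw x = hammingNorm x := rfl

lemma dH_eq_hammingDist (x y : Fin n → F) : dH x y = hammingDist x y := by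
  simp only [dH, hw, hammingDist, Pi.sub_apply, sub_ne_zero]

lemma hw_add_eq_hammingDist_neg (x c : Fin n → F) : hw (x + c) = hammingDist x (-c) := by
  rw [← dH_eq_hammingDist, dH, sub_neg_eq_add]

lemma dHSet_le {A : Set (Fin n → F)} {a : Fin n → F} (ha : a ∈ A) (y : Fin n → F) :
    dHSet A y ≤ dH y a :=
  Nat.sInf_le ⟨a, ha, rfl⟩

lemma notMem_of_mem_XB {A : Set (Fin n → F)} {y : Fin n → F} (hy : y ∈ XB A) : y ∉ A := by
  intro hyA
  have := dHSet_le hyA y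
  rw [dH_eq_hammingDist, hammingDist_self] at this
  have hy' : dHSet A y = 1 := hy
  omega

lemma exists_dH_eq_one_of_mem_XB {A : Set (Fin n → F)} {y : Fin n → F} (hy : y ∈ XB A) :
    ∃ a ∈ A, dH y a = 1 := by
  have hne : ((dH y) '' A).Nonempty := by
    by_contra h
    rw [Set.not_nonempty_iff_eq_empty] at h
    have hy' : dHSet A y = 1 := hy
    simp [dHSet, h] at hy'
  obtain ⟨a, ha, hya⟩ := Nat.sInf_mem hne
  exact ⟨a, ha, hya.trans hy⟩

variable {C : Submodule F (Fin n → F)}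

lemma mem_vorD_iff_isCosetLeader_sub {w : Fin n → F} (hw : w ∈ C) {y : Fin n → F} :
    y ∈ VorD C w ↔ isCosetLeader C (y - w) := by
  constructor
  · intro hy c hc
    simpa [dH, sub_sub_eq_add_sub, sub_add_eq_add_sub] using hy (w - c) (C.sub_mem hw hc)
  · intro hy c hc
    simpa [dH] using hy (w - c) (C.sub_mem hw hc)

lemma vorD_zero : VorD C 0 = CL C := by
  ext y
  simpa [CL] using mem_vorD_iff_isCosetLeader_sub C.zero_mem (y := y)

lemma isCosetLeader_of_hw_add_dH_le {v y : Fin n → F} (hv : isCosetLeader C v)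
    (h : hw y + dH y v ≤ hw v) : isCosetLeader C y := by
  intro c hc
  have hvc := hv c hc
  rw [hw_add_eq_hammingDist_neg] at hvc ⊢
  rw [dH_eq_hammingDist] at h
  have := hammingDist_triangle v y (-c)
  rw [hammingDist_comm v y] at this
  omega

end CosetLeader

theorem stmt10 (C : Submodule K (Fin n → K)) (b : Module.Basis (Fin m) (ZMod p) K) (β : K)
    (hβ : ∀ j : Fin m, b j = β ^ (j : ℕ))
    (w : Fin n → K) (hwC : w ∈ C) (hw0 : w ≠ 0)
    (hint : (XB (VorD C 0) ∩ VorD C w).Nonempty) :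
    isLeaderCodeword C b β w := by
  obtain ⟨y, hyX, hyw⟩ := hint
  rw [vorD_zero] at hyX
  obtain ⟨v, hv, hyv⟩ := exists_dH_eq_one_of_mem_XB hyX
  obtain ⟨i, hyvi, hyv_off⟩ :=
    exists_forall_ne_eq_of_hammingDist_eq_one ((dH_eq_hammingDist y v).symm.trans hyv)
  have hyi : y i ≠ 0 := by
    intro hyi
    refine notMem_of_mem_XB hyX (isCosetLeader_of_hw_add_dH_le hv ?_)
    rw [hyv, hw_eq_hammingNorm, hw_eq_hammingNorm]
    exact hammingNorm_lt_of_forall_ne_eq hyv_off hyi fun hvi => hyvi (hyi.trans hvi.symm)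
  obtain ⟨j, hj⟩ : ∃ j, b.repr (y i) j ≠ 0 := by
    simpa using Finsupp.ne_iff.mp (b.repr.map_ne_zero_iff.mpr hyi)
  have he : eGen β i j i = b j := by rw [eGen, Pi.single_eq_same, hβ]
  refine ⟨hw0, hwC, y - eGen β i j, y - w, i, j, by abel, ?_,
    (mem_vorD_iff_isCosetLeader_sub hwC).mp hyw, ?_, ?_⟩
  · rw [sub_add_cancel, Pi.sub_apply, he, map_sub, b.repr_self]
    simpa using ZMod.val_eq_val_sub_one_add_one hj
  · refine (dHSet_le hv _).trans ?_
    rw [dH_eq_hammingDist]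
    refine hammingDist_le_one_of_forall_ne_eq (i := i) fun k hk => ?_
    simp [eGen, Pi.single_eq_of_ne hk, hyv_off k hk]
  · rw [sub_add_cancel]
    exact (dHSet_le hv y).trans hyv.le
end

section
/- Every leader codeword of a linear code C is a zero neighbour: its Voronoi region shares a common boundary with the Voronoi region of the zero codeword. -/
/-!
Write the leader codeword as `w = v - n₂` with `v = n₁ + e_{ij}`. Since `v - w = n₂` is a coset
leader, `v` lies in `D(w)`; since `v` is within distance one of a coset leader `ℓ`, and coset
leaders lie in `D(0)`, we get adjacent words `v ∈ D(w)` and `ℓ ∈ D(0)`. If neither lies in both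
regions, `v` itself is on both boundaries. Otherwise some word lies in `D(w) ∩ D(0)`, and walking
from it towards `0` one coordinate at a time produces a word on both boundaries.
-/

open Finset Set

variable {p m n : ℕ} [Fact p.Prime] {K : Type} [Field K] [Fintype K] [DecidableEq K]
  [Algebra (ZMod p) K]

section HammingSpace

variable {F : Type} [Field F] [DecidableEq F] {x y a c w : Fin n → F} {A : Set (Fin n → F)}
  {C : Submodule F (Fin n → F)}

lemma dH_eq_card (x y : Fin n → F) : dH x y = #{i | x i ≠ y i} := by
  simp only [dH, hw, Pi.sub_apply, sub_ne_zero]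

lemma dH_zero_right (x : Fin n → F) : dH x 0 = hw x := by
  rw [dH, sub_zero]

lemma dH_eq_zero_iff : dH x y = 0 ↔ x = y := by
  simp only [dH_eq_card, Finset.card_eq_zero, Finset.filter_eq_empty_iff, Finset.mem_univ,
    true_implies, not_not, funext_iff]

lemma dH_triangle (x y z : Fin n → F) : dH x z ≤ dH x y + dH y z := by
  simp only [dH_eq_card]
  refine (Finset.card_le_card fun i hi => ?_).trans (Finset.card_union_le _ _)
  simp only [Finset.mem_filter, Finset.mem_univ, true_and, Finset.mem_union] at hi ⊢
  by_contra! h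
  exact hi (h.1.trans h.2)

lemma dH_update_eq_one {k : Fin n} {c : F} (h : x k ≠ c) : dH x (Function.update x k c) = 1 := by
  rw [dH_eq_card, Finset.card_eq_one]
  refine ⟨k, Finset.ext fun i => ?_⟩
  by_cases hik : i = k <;> simp [Function.update_apply, hik, h]

lemma dH_update_add_one {k : Fin n} (h : x k ≠ y k) :
    dH (Function.update x k (y k)) y + 1 = dH x y := by
  have hsupp : ({i | Function.update x k (y k) i ≠ y i} : Finset (Fin n))
      = ({i | x i ≠ y i} : Finset (Fin n)).erase k := by
    ext i
    by_cases hik : i = k <;> simp [Function.update_apply, hik]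
  rw [dH_eq_card, dH_eq_card, hsupp, Finset.card_erase_add_one (by simpa using h)]

lemma hw_le_hw_update (x : Fin n → F) (k : Fin n) {c : F} (hc : c ≠ 0) :
    hw x ≤ hw (Function.update x k c) := by
  refine Finset.card_le_card fun i hi => ?_
  by_cases hik : i = k <;> simp_all [Function.update_apply]

/-- Otherwise `x - y` is `x` with the support of `y` erased, which has smaller weight. -/
lemma exists_ne_of_hw_le_hw_sub (hy : y ≠ 0) (h : hw x ≤ hw (x - y)) :
    ∃ k, y k ≠ 0 ∧ x k ≠ y k := by
  by_contra! hxy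
  obtain ⟨k, hk⟩ := Function.ne_iff.mp hy
  refine h.not_gt (Finset.card_lt_card ⟨fun i hi => ?_, fun hsub => ?_⟩)
  · simp only [Finset.mem_filter, Finset.mem_univ, true_and, Pi.sub_apply, sub_ne_zero] at hi ⊢
    by_cases hyi : y i = 0
    · rwa [← hyi]
    · exact absurd (hxy i hyi) hi
  · have : k ∈ ({i | x i ≠ 0} : Finset (Fin n)) := by simpa [hxy k hk] using hk
    simpa [hxy k hk] using hsub this

lemma dHSet_eq_one (hy : y ∉ A) (hx : x ∈ A) (h : dH y x = 1) : dHSet A y = 1 := by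
  refine le_antisymm (Nat.sInf_le ⟨x, hx, h⟩) (le_csInf ⟨1, x, hx, h⟩ ?_)
  rintro _ ⟨z, hz, rfl⟩
  exact Nat.one_le_iff_ne_zero.mpr fun h0 => hy (dH_eq_zero_iff.mp h0 ▸ hz)

lemma mem_bdry_of_notMem (hy : y ∉ A) (hx : x ∈ A) (h : dH y x = 1) : y ∈ bdry A :=
  Or.inl (dHSet_eq_one hy hx h)

lemma mem_bdry_of_mem (hx : x ∈ A) (hy : y ∉ A) (h : dH x y = 1) : x ∈ bdry A :=
  Or.inr (dHSet_eq_one (not_not.mpr hx) hy h)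

lemma zero_mem_CL (C : Submodule F (Fin n → F)) : (0 : Fin n → F) ∈ CL C := by
  intro c _
  simp [hw]

lemma exists_mem_CL_dH_eq_dHSet (C : Submodule F (Fin n → F)) (y : Fin n → F) :
    ∃ ℓ ∈ CL C, dH y ℓ = dHSet (CL C) y :=
  Nat.sInf_mem (s := dH y '' CL C) ⟨_, 0, zero_mem_CL C, rfl⟩

lemma mem_VorD_of_isCosetLeader_sub (hc : c ∈ C) (h : isCosetLeader C (a - c)) :
    a ∈ VorD C c := by
  intro c' hc'
  have := h (c - c') (C.sub_mem hc hc')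
  rwa [sub_add_sub_cancel] at this

lemma eq_zero_of_zero_mem_VorD (h : 0 ∈ VorD C w) : w = 0 := by
  have h00 : dH (0 : Fin n → F) 0 = 0 := dH_eq_zero_iff.mpr rfl
  exact (dH_eq_zero_iff.mp (Nat.le_zero.mp (h00 ▸ h 0 C.zero_mem))).symm

lemma update_mem_VorD {k : Fin n} (ha : a ∈ VorD C c) (hk : a k ≠ c k) :
    Function.update a k (c k) ∈ VorD C c := by
  intro c' hc'
  have h₁ := dH_update_add_one hk
  have h₂ := dH_triangle a (Function.update a k (c k)) c'
  have h₃ := ha c' hc'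
  rw [dH_update_eq_one hk] at h₂
  omega

/-- `a` is equidistant from `0` and `w`; moving it one step towards `w` inside the support of
`w` does not lower its weight, so the new word is strictly closer to `w` than to `0`. -/
lemma mem_bdry_VorD_zero_of_mem_VorD (hwC : w ∈ C) (hw0 : w ≠ 0) (haw : a ∈ VorD C w)
    (ha0 : a ∈ VorD C 0) : a ∈ bdry (VorD C 0) := by
  have hdist : dH a 0 ≤ dH a w := ha0 w hwC
  obtain ⟨k, hwk, hak⟩ := exists_ne_of_hw_le_hw_sub hw0 (by rwa [dH_zero_right] at hdist)
  refine mem_bdry_of_mem ha0 (fun hu => ?_) (dH_update_eq_one hak)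
  have h₁ := hu w hwC
  have h₂ := dH_update_add_one hak
  have h₃ := haw 0 C.zero_mem
  have h₄ := hw_le_hw_update a k hwk
  rw [dH_zero_right] at h₁ h₃
  omega

/-- Walking from `a` towards `0` one coordinate at a time stays inside `D(0)` and must leave
`D(w)` (since `0 ∉ D(w)`); the last word of the walk inside `D(w)` is on both boundaries. -/
theorem bdry_VorD_inter_nonempty_of_mem_inter (hwC : w ∈ C) (hw0 : w ≠ 0)
    (haw : a ∈ VorD C w) (ha0 : a ∈ VorD C 0) :
    (bdry (VorD C w) ∩ bdry (VorD C 0)).Nonempty := by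
  induction hd : dH a 0 using Nat.strong_induction_on generalizing a with
  | _ d ih =>
    obtain ⟨k, hk⟩ : ∃ k, a k ≠ 0 :=
      Function.ne_iff.mp fun ha => hw0 (eq_zero_of_zero_mem_VorD (ha ▸ haw))
    have hstep : dH (Function.update a k 0) 0 + 1 = dH a 0 := dH_update_add_one (y := 0) hk
    by_cases ha'w : Function.update a k 0 ∈ VorD C w
    · exact ih _ (by omega) ha'w (update_mem_VorD (c := 0) ha0 hk) rfl
    · exact ⟨a, mem_bdry_of_mem haw ha'w (dH_update_eq_one hk),
        mem_bdry_VorD_zero_of_mem_VorD hwC hw0 haw ha0⟩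

theorem bdry_VorD_inter_nonempty_of_dH_le_one (hwC : w ∈ C) (hw0 : w ≠ 0) {v ℓ : Fin n → F}
    (hv : v ∈ VorD C w) (hℓ : ℓ ∈ VorD C 0) (hvℓ : dH v ℓ ≤ 1) :
    (bdry (VorD C w) ∩ bdry (VorD C 0)).Nonempty := by
  by_cases hv0 : v ∈ VorD C 0
  · exact bdry_VorD_inter_nonempty_of_mem_inter hwC hw0 hv hv0
  by_cases hℓw : ℓ ∈ VorD C w
  · exact bdry_VorD_inter_nonempty_of_mem_inter hwC hw0 hℓw hℓ
  have hvℓ : dH v ℓ = 1 := by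
    refine le_antisymm hvℓ (Nat.one_le_iff_ne_zero.mpr fun h => hv0 ?_)
    rwa [dH_eq_zero_iff.mp h]
  exact ⟨v, mem_bdry_of_mem hv hℓw hvℓ, mem_bdry_of_notMem hv0 hℓ hvℓ⟩

end HammingSpace

theorem stmt11_general (C : Submodule K (Fin n → K)) (b : Module.Basis (Fin m) (ZMod p) K) (β : K)
    (w : Fin n → K) (hw' : isLeaderCodeword C b β w) :
    (bdry (VorD C w) ∩ bdry (VorD C 0)).Nonempty := by
  obtain ⟨hw0, hwC, n₁, n₂, i, j, rfl, -, hn₂, -, hCL⟩ := hw'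
  obtain ⟨ℓ, hℓ, hdℓ⟩ := exists_mem_CL_dH_eq_dHSet C (n₁ + eGen β i j)
  refine bdry_VorD_inter_nonempty_of_dH_le_one hwC hw0 ?_ ?_ (hdℓ ▸ hCL)
  · exact mem_VorD_of_isCosetLeader_sub hwC (by rwa [sub_sub_cancel])
  · exact mem_VorD_of_isCosetLeader_sub C.zero_mem (by rwa [sub_zero])

/-- every leader codeword is a zero neighbour. -/
theorem stmt11 (C : Submodule K (Fin n → K)) (b : Module.Basis (Fin m) (ZMod p) K) (β : K)
    (hβ : ∀ j : Fin m, b j = β ^ (j : ℕ))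
    (w : Fin n → K) (hw' : isLeaderCodeword C b β w) :
    (bdry (VorD C w) ∩ bdry (VorD C 0)).Nonempty :=
  stmt11_general C b β w hw'
end
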